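/- Every group homomorphism ψ : G₂ → G₂ satisfying ψ(y₁) = y₁⁻¹, ψ(y₂) = y₂⁻¹, ψ(y₃) = y₃⁻¹, ψ(y₄) = y₄⁻¹, and ψ(v) = v·y₃⁻¹ is an involution, i.e. ψ ∘ ψ is the identity map of G₂; in particular, ψ is an automorphism of G₂. -/

import Mathlib

/-- Relator words for the presentation of `G₂`: generators are indexed by `Fin 5`,
with `0,1,2,3` corresponding to `y₁,y₂,y₃,y₄` and `4` to `v`.  The relations are
`v⁻¹·yᵢ·v = wᵢ` written as relators `(v⁻¹·yᵢ·v)·wᵢ⁻¹`. -/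
def G2rels : Set (FreeGroup (Fin 5)) :=
  {((FreeGroup.of 4)⁻¹ * FreeGroup.of 0 * FreeGroup.of 4) *
      (FreeGroup.of 0 * (FreeGroup.of 3)⁻¹ * FreeGroup.of 0 * FreeGroup.of 2)⁻¹,
   ((FreeGroup.of 4)⁻¹ * FreeGroup.of 1 * FreeGroup.of 4) *
      ((FreeGroup.of 2)⁻¹ * FreeGroup.of 1 * FreeGroup.of 2 * FreeGroup.of 0 *
        FreeGroup.of 2 * FreeGroup.of 1)⁻¹,
   ((FreeGroup.of 4)⁻¹ * FreeGroup.of 2 * FreeGroup.of 4) *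
      (FreeGroup.of 1 * FreeGroup.of 2)⁻¹,
   ((FreeGroup.of 4)⁻¹ * FreeGroup.of 3 * FreeGroup.of 4) *
      ((FreeGroup.of 2)⁻¹ * (FreeGroup.of 1)⁻¹ * (FreeGroup.of 1)⁻¹)⁻¹}

/-- The group `G₂ = ⟨y₁,y₂,y₃,y₄,v ∣ v⁻¹·y₁·v = y₁·y₄⁻¹·y₁·y₃,
`v⁻¹·y₂·v = y₃⁻¹·y₂·y₃·y₁·y₃·y₂`, `v⁻¹·y₃·v = y₂·y₃`,
`v⁻¹·y₄·v = y₃⁻¹·y₂⁻¹·y₂⁻¹⟩`. -/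
abbrev G₂ : Type := PresentedGroup G2rels

def y₁ : G₂ := PresentedGroup.of 0
def y₂ : G₂ := PresentedGroup.of 1
def y₃ : G₂ := PresentedGroup.of 2
def y₄ : G₂ := PresentedGroup.of 3
def v : G₂ := PresentedGroup.of 4

theorem MonoidHom.apply_apply_of_apply_eq_inv {G : Type*} [Group G] (ψ : G →* G) {x : G}
    (hx : ψ x = x⁻¹) : ψ (ψ x) = x := by
  rw [hx, map_inv, hx, inv_inv]

theorem MonoidHom.apply_apply_of_apply_eq_mul_inv {G : Type*} [Group G] (ψ : G →* G) {x y : G}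
    (hy : ψ y = y⁻¹) (hx : ψ x = x * y⁻¹) : ψ (ψ x) = x := by
  rw [hx, map_mul, hx, map_inv, hy, inv_inv, inv_mul_cancel_right]

theorem G2_hom_ext {H : Type*} [Group H] {f g : G₂ →* H} (h₁ : f y₁ = g y₁) (h₂ : f y₂ = g y₂)
    (h₃ : f y₃ = g y₃) (h₄ : f y₄ = g y₄) (hv : f v = g v) : f = g :=
  PresentedGroup.ext fun i => by fin_cases i <;> assumption

/-- Any endomorphism of `G₂` sending `yᵢ ↦ yᵢ⁻¹` and `v ↦ v·y₃⁻¹` is an involution,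
hence an automorphism. -/
theorem G2_hom_is_involution (ψ : G₂ →* G₂)
    (h₁ : ψ y₁ = y₁⁻¹) (h₂ : ψ y₂ = y₂⁻¹) (h₃ : ψ y₃ = y₃⁻¹) (h₄ : ψ y₄ = y₄⁻¹)
    (hv : ψ v = v * y₃⁻¹) :
    (∀ g : G₂, ψ (ψ g) = g) ∧ Function.Bijective ψ := by
  have hψψ : ψ.comp ψ = MonoidHom.id G₂ :=
    G2_hom_ext (ψ.apply_apply_of_apply_eq_inv h₁) (ψ.apply_apply_of_apply_eq_inv h₂)
      (ψ.apply_apply_of_apply_eq_inv h₃) (ψ.apply_apply_of_apply_eq_inv h₄)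
      (ψ.apply_apply_of_apply_eq_mul_inv h₃ hv)
  have hψ : Function.Involutive ψ := DFunLike.congr_fun hψψ
  exact ⟨hψ, hψ.bijective⟩
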